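/- arXiv:0908.2682 — 5 statements merged into one kernel-verified Lean document; each statement's English description precedes it below -/
import Mathlib

section
/- For each fixed x ∈ (0, 2π), the function t ↦ f(x,t) = 2·e^t·arctan(e^{-t}·sin(x/2)) is strictly increasing in t ∈ ℝ. -/
lemma arctan_key : ∀ u : ℝ, 0 < u → u / (1 + u ^ 2) < Real.arctan u := by
  have hmono : StrictMonoOn (fun u : ℝ => Real.arctan u - u / (1 + u ^ 2)) (Set.Ici 0) := by
    apply strictMonoOn_of_deriv_pos (convex_Ici 0)
    · exact (Real.continuous_arctan.sub (continuous_id.div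
        (by continuity) (fun u => by positivity))).continuousOn
    · intro u hu
      rw [interior_Ici] at hu
      have hne : (1 + u ^ 2) ≠ 0 := by positivity
      have hu' : (0:ℝ) < u := hu
      have hsq : HasDerivAt (fun u : ℝ => 1 + u ^ 2) (2 * u) u := by
        simpa using (hasDerivAt_pow 2 u).const_add 1
      have h1 : HasDerivAt (fun u : ℝ => Real.arctan u - u / (1 + u ^ 2))
          (1 / (1 + u ^ 2) - ((1 * (1 + u ^ 2) - u * (2 * u)) / (1 + u ^ 2) ^ 2)) u :=
        (Real.hasDerivAt_arctan u).sub ((hasDerivAt_id u).div hsq hne)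
      rw [h1.deriv]
      have heq : (1 : ℝ) / (1 + u ^ 2) - (1 * (1 + u ^ 2) - u * (2 * u)) / (1 + u ^ 2) ^ 2
          = 2 * u ^ 2 / (1 + u ^ 2) ^ 2 := by
        field_simp
        ring
      rw [heq]
      positivity
  intro u hu
  have := hmono (Set.self_mem_Ici) (Set.mem_Ici.mpr hu.le) hu
  simp only [Real.arctan_zero, zero_div, sub_zero] at this
  linarith

theorem f_strictMono_in_t (x : ℝ) (hx : x ∈ Set.Ioo 0 (2 * Real.pi)) :
    StrictMono (fun t : ℝ =>
      2 * Real.exp t * Real.arctan (Real.exp (-t) * Real.sin (x / 2))) := by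
  obtain ⟨hx0, hx2⟩ := hx
  set s := Real.sin (x / 2) with hs
  have hspos : 0 < s := Real.sin_pos_of_pos_of_lt_pi (by linarith) (by linarith)
  apply strictMono_of_deriv_pos
  intro t
  have hinner : HasDerivAt (fun t : ℝ => Real.exp (-t) * s)
      (Real.exp (-t) * (-1) * s) t :=
    (((hasDerivAt_id t).neg).exp).mul_const s
  have harc : HasDerivAt (fun t : ℝ => Real.arctan (Real.exp (-t) * s))
      (1 / (1 + (Real.exp (-t) * s) ^ 2) * (Real.exp (-t) * (-1) * s)) t :=
    (Real.hasDerivAt_arctan _).comp t hinner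
  have hfull : HasDerivAt (fun t : ℝ =>
      2 * Real.exp t * Real.arctan (Real.exp (-t) * s))
      (2 * Real.exp t * Real.arctan (Real.exp (-t) * s)
        + 2 * Real.exp t * (1 / (1 + (Real.exp (-t) * s) ^ 2) * (Real.exp (-t) * (-1) * s))) t := by
    have := ((Real.hasDerivAt_exp t).const_mul 2).mul harc
    exact this
  rw [hfull.deriv]
  set u := Real.exp (-t) * s with hu
  have hupos : 0 < u := by positivity
  have hkey := arctan_key u hupos
  have hexp : Real.exp t * Real.exp (-t) = 1 := by
    rw [← Real.exp_add]; simp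
  have hden : (0:ℝ) < 1 + u ^ 2 := by positivity
  have het : 0 < Real.exp t := Real.exp_pos t
  have h1 : 2 * Real.exp t * (1 / (1 + u ^ 2) * (Real.exp (-t) * (-1) * s))
      = -(2 * Real.exp t * (u / (1 + u ^ 2))) := by
    rw [hu]; field_simp
  rw [h1]
  have hlt : 2 * Real.exp t * (u / (1 + u ^ 2)) < 2 * Real.exp t * Real.arctan u :=
    mul_lt_mul_of_pos_left hkey (by positivity)
  linarith
end

section
/- For each fixed t ∈ ℝ, the function x ↦ f(x,t) = 2·e^t·arctan(e^{-t}·sin(x/2)) is strictly concave on [0, 2π]. -/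
open Real

theorem f_strictConcave_in_x (t : ℝ) :
    StrictConcaveOn ℝ (Set.Icc 0 (2 * Real.pi))
      (fun x : ℝ =>
        2 * Real.exp t * Real.arctan (Real.exp (-t) * Real.sin (x / 2))) := by
  set a := Real.exp (-t) with ha
  set C := 2 * Real.exp t with hC
  have hapos : (0:ℝ) < a := Real.exp_pos _
  have hCpos : (0:ℝ) < C := by positivity
  have hDpos : ∀ x : ℝ, (0:ℝ) < 1 + (a * Real.sin (x/2))^2 := fun x => by positivity
  have hinner : ∀ x : ℝ, HasDerivAt (fun x : ℝ => a * Real.sin (x/2))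
      (a * (Real.cos (x/2) * (1/2))) x := by
    intro x
    have h1 : HasDerivAt (fun x : ℝ => x/2) (1/2) x := by
      simpa using (hasDerivAt_id x).div_const 2
    exact ((Real.hasDerivAt_sin (x/2)).comp x h1).const_mul a
  have hf' : ∀ x : ℝ, HasDerivAt
      (fun x : ℝ => C * Real.arctan (a * Real.sin (x/2)))
      (C * ((a * (Real.cos (x/2) * (1/2))) / (1 + (a * Real.sin (x/2))^2))) x := by
    intro x
    have h2 := (Real.hasDerivAt_arctan (a * Real.sin (x/2))).comp x (hinner x)
    have h3 : HasDerivAt (fun x : ℝ => Real.arctan (a * Real.sin (x/2)))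
        ((a * (Real.cos (x/2) * (1/2))) / (1 + (a * Real.sin (x/2))^2)) x := by
      simpa [div_eq_mul_inv, mul_comm, Function.comp_def] using h2
    exact h3.const_mul C
  have hderiv : deriv (fun x : ℝ => C * Real.arctan (a * Real.sin (x/2)))
      = fun x : ℝ => C * ((a * (Real.cos (x/2) * (1/2))) / (1 + (a * Real.sin (x/2))^2)) := by
    funext x; exact (hf' x).deriv
  have hf'' : ∀ x : ℝ, HasDerivAt
      (fun x : ℝ => C * ((a * (Real.cos (x/2) * (1/2))) / (1 + (a * Real.sin (x/2))^2)))
      (C * (((a * ((-Real.sin (x/2) * (1/2)) * (1/2))) * (1 + (a * Real.sin (x/2))^2)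
        - (a * (Real.cos (x/2) * (1/2))) * (2 * (a * Real.sin (x/2)) * (a * (Real.cos (x/2) * (1/2)))))
        / (1 + (a * Real.sin (x/2))^2)^2)) x := by
    intro x
    have h1 : HasDerivAt (fun x : ℝ => x/2) (1/2) x := by
      simpa using (hasDerivAt_id x).div_const 2
    have hN : HasDerivAt (fun x : ℝ => a * (Real.cos (x/2) * (1/2)))
        (a * ((-Real.sin (x/2) * (1/2)) * (1/2))) x := by
      have := ((Real.hasDerivAt_cos (x/2)).comp x h1).mul_const (1/2)
      exact this.const_mul a
    have hDd : HasDerivAt (fun x : ℝ => 1 + (a * Real.sin (x/2))^2)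
        (2 * (a * Real.sin (x/2)) * (a * (Real.cos (x/2) * (1/2)))) x := by
      have := (hinner x).pow 2
      simpa [pow_one, mul_comm, mul_left_comm, mul_assoc] using this.const_add 1
    exact (hN.div hDd (ne_of_gt (hDpos x))).const_mul C
  apply strictConcaveOn_of_deriv2_neg (convex_Icc _ _)
  · have hc : Continuous fun x : ℝ => C * Real.arctan (a * Real.sin (x/2)) :=
      continuous_const.mul (Real.continuous_arctan.comp
        (continuous_const.mul (Real.continuous_sin.comp (continuous_id.div_const 2))))
    exact hc.continuousOn
  · intro x hx
    rw [interior_Icc] at hx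
    have hpi := Real.pi_pos
    have hs : 0 < Real.sin (x/2) := by
      apply Real.sin_pos_of_pos_of_lt_pi
      · linarith [hx.1]
      · linarith [hx.2]
    have hkey : deriv (deriv (fun x : ℝ => C * Real.arctan (a * Real.sin (x/2)))) x
        = (C * (((a * ((-Real.sin (x/2) * (1/2)) * (1/2))) * (1 + (a * Real.sin (x/2))^2)
        - (a * (Real.cos (x/2) * (1/2))) * (2 * (a * Real.sin (x/2)) * (a * (Real.cos (x/2) * (1/2)))))
        / (1 + (a * Real.sin (x/2))^2)^2)) := by
      rw [hderiv]; exact (hf'' x).deriv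
    show deriv^[2] _ x < 0
    rw [Function.iterate_succ, Function.iterate_one, Function.comp_apply, hkey]
    apply mul_neg_of_pos_of_neg hCpos
    apply div_neg_of_neg_of_pos _ (by positivity)
    nlinarith [sq_nonneg (Real.cos (x/2)), sq_nonneg (a * Real.sin (x/2)),
      mul_pos hapos hs, sq_nonneg (a * Real.cos (x/2)),
      mul_nonneg (mul_pos hapos hs).le (sq_nonneg (a * Real.cos (x/2)))]
end

section
/- The function z ↦ (arccos z)^2 is convex on [0, 1]. -/
open Real Set

theorem arccos_sq_convex :
    ConvexOn ℝ (Set.Icc (0 : ℝ) 1) (fun z : ℝ => (Real.arccos z) ^ 2) := by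
  have hint : interior (Set.Icc (0:ℝ) 1) = Ioo (0:ℝ) 1 := interior_Icc
  apply convexOn_of_hasDerivWithinAt2_nonneg (f' := fun x => 2 * arccos x * -(1 / sqrt (1 - x ^ 2)))
    (f'' := fun x => 2 / (sqrt (1 - x ^ 2)) ^ 2 - 2 * x * arccos x / (sqrt (1 - x ^ 2)) ^ 3)
    (convex_Icc 0 1) (Real.continuous_arccos.pow 2).continuousOn
  · intro x hx
    rw [hint] at hx
    have h1 : x ≠ -1 := by intro h; rw [h] at hx; linarith [hx.1]
    have h2 : x ≠ 1 := ne_of_lt hx.2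
    exact ((Real.hasDerivAt_arccos h1 h2).pow 2).hasDerivWithinAt.mono (by rw [hint])
      |>.congr_deriv (by push_cast; ring)
  · intro x hx
    rw [hint] at hx
    have hx0 : (0:ℝ) < x := hx.1
    have hx1 : x < 1 := hx.2
    have h1 : x ≠ -1 := by linarith
    have h2 : x ≠ 1 := ne_of_lt hx1
    have hpos : (0:ℝ) < 1 - x ^ 2 := by nlinarith
    have hs : (0:ℝ) < sqrt (1 - x ^ 2) := Real.sqrt_pos.2 hpos
    have hsq : sqrt (1 - x ^ 2) ^ 2 = 1 - x ^ 2 := Real.sq_sqrt hpos.le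
    -- derivative of sqrt (1 - y^2)
    have hinner : HasDerivAt (fun y : ℝ => 1 - y ^ 2) (-(2 * x)) x := by
      simpa using (hasDerivAt_pow 2 x).const_sub 1
    have hsqrt : HasDerivAt (fun y : ℝ => sqrt (1 - y ^ 2))
        (-(2 * x) / (2 * sqrt (1 - x ^ 2))) x := by
      simpa [div_eq_mul_inv, mul_comm, Function.comp_def] using
        (Real.hasDerivAt_sqrt (ne_of_gt hpos)).comp x hinner
    have harccos := Real.hasDerivAt_arccos h1 h2
    have hu : HasDerivAt (fun y : ℝ => 2 * arccos y) (2 * -(1 / sqrt (1 - x ^ 2))) x :=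
      harccos.const_mul 2
    have hinv : HasDerivAt (fun y : ℝ => -(1 / sqrt (1 - y ^ 2)))
        (-(-( -(2 * x) / (2 * sqrt (1 - x ^ 2))) / (sqrt (1 - x ^ 2)) ^ 2)) x := by
      simpa [one_div, Pi.inv_def, Pi.neg_def] using (hsqrt.inv (ne_of_gt hs)).neg
    have hmul := hu.mul hinv
    refine (hmul.hasDerivWithinAt.mono (by rw [hint])).congr_deriv ?_
    have hne := ne_of_gt hs
    generalize Real.sqrt (1 - x ^ 2) = s at hne ⊢
    field_simp
    ring
  · intro x hx
    rw [hint] at hx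
    have hx0 : (0:ℝ) < x := hx.1
    have hx1 : x < 1 := hx.2
    have hpos : (0:ℝ) < 1 - x ^ 2 := by nlinarith
    have hs : (0:ℝ) < sqrt (1 - x ^ 2) := Real.sqrt_pos.2 hpos
    have hsq : sqrt (1 - x ^ 2) ^ 2 = 1 - x ^ 2 := Real.sq_sqrt hpos.le
    -- key : x * arccos x < sqrt (1 - x^2)
    have hθ0 : (0:ℝ) < arccos x := Real.arccos_pos.2 hx1
    have hθ2 : arccos x < π / 2 := Real.arccos_lt_pi_div_two.2 hx0
    have htan : arccos x < Real.tan (arccos x) := Real.lt_tan hθ0 hθ2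
    have hcos : Real.cos (arccos x) = x := Real.cos_arccos (by linarith) hx1.le
    have hsin : Real.sin (arccos x) = sqrt (1 - x ^ 2) := Real.sin_arccos x
    rw [Real.tan_eq_sin_div_cos, hcos, hsin] at htan
    have hkey : x * arccos x < sqrt (1 - x ^ 2) := by
      rw [lt_div_iff₀ hx0] at htan; linarith [htan]
    have : 2 * x * arccos x / (sqrt (1 - x ^ 2)) ^ 3 ≤ 2 / (sqrt (1 - x ^ 2)) ^ 2 := by
      rw [div_le_div_iff₀ (by positivity) (by positivity)]
      nlinarith [hs, hkey, pow_pos hs 2]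
    linarith
end

section
/- For all z ∈ [0,1] and ℓ ∈ (0, 2π), (arccos z)^2 ≥ ℓ²/4 − (ℓ/sin(ℓ/2))·(z − cos(ℓ/2)), provided ℓ ∈ (0, 2π) so that sin(ℓ/2) > 0. -/
open Real

/-- `x * cos x ≤ sin x` on `[0, π]`. -/
lemma aux_xcos_le_sin {x : ℝ} (hx0 : 0 ≤ x) (hxpi : x ≤ Real.pi) :
    x * Real.cos x ≤ Real.sin x := by
  rcases le_or_gt (Real.cos x) 0 with h | h
  · have hs : 0 ≤ Real.sin x := Real.sin_nonneg_of_mem_Icc ⟨hx0, hxpi⟩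
    nlinarith
  · rcases eq_or_lt_of_le hx0 with h0 | h0
    · simp [← h0]
    · have hx2 : x < Real.pi / 2 := by
        by_contra hle
        push_neg at hle
        have : Real.cos x ≤ 0 := Real.cos_nonpos_of_pi_div_two_le_of_le hle
          (by linarith [Real.pi_pos])
        linarith
      have ht := Real.lt_tan h0 hx2
      rw [Real.tan_eq_sin_div_cos] at ht
      rw [lt_div_iff₀ h] at ht
      linarith

/-- `a * sin s ≤ s * sin a` for `0 ≤ a ≤ s ≤ π`. -/
lemma aux_sin_ratio {a s : ℝ} (ha : 0 ≤ a) (has : a ≤ s) (hs : s ≤ Real.pi) :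
    a * Real.sin s ≤ s * Real.sin a := by
  have hw0 : 0 ≤ s - a := by linarith
  have hwpi : s - a ≤ Real.pi := by linarith
  have hadd : Real.sin s = Real.sin a * Real.cos (s - a) + Real.cos a * Real.sin (s - a) := by
    have := Real.sin_add a (s - a)
    simpa using this
  have h1 : 0 ≤ Real.sin (s - a) := Real.sin_nonneg_of_mem_Icc ⟨hw0, hwpi⟩
  have h2 : Real.sin (s - a) ≤ s - a := Real.sin_le hw0
  have h3 : 0 ≤ Real.sin a := Real.sin_nonneg_of_mem_Icc ⟨ha, by linarith⟩
  have h4 : a * Real.cos a ≤ Real.sin a := aux_xcos_le_sin ha (by linarith)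
  have h5 : Real.cos (s - a) ≤ 1 := Real.cos_le_one _
  nlinarith [mul_nonneg (mul_nonneg ha h3) (sub_nonneg.mpr h5),
    mul_le_mul_of_nonneg_right h4 h1,
    mul_le_mul_of_nonneg_left h2 h3]

/-- Key inequality: `(t² - a²) sin a + 2a (cos t - cos a) ≥ 0` for `t ∈ [0,π]`, `a ∈ (0,π)`. -/
lemma aux_key {t a : ℝ} (ht0 : 0 ≤ t) (htpi : t ≤ Real.pi) (ha0 : 0 < a) (hapi : a < Real.pi) :
    0 ≤ (t ^ 2 - a ^ 2) * Real.sin a + 2 * a * (Real.cos t - Real.cos a) := by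
  have hcc := Real.cos_sub_cos t a
  set s := (t + a) / 2 with hs
  set d := (t - a) / 2 with hd
  have hs0 : 0 ≤ s := by rw [hs]; linarith
  have hspi : s ≤ Real.pi := by rw [hs]; linarith
  have hsins : 0 ≤ Real.sin s := Real.sin_nonneg_of_mem_Icc ⟨hs0, hspi⟩
  have hsina : 0 ≤ Real.sin a := Real.sin_nonneg_of_mem_Icc ⟨le_of_lt ha0, le_of_lt hapi⟩
  have hsq : t ^ 2 - a ^ 2 = 4 * d * s := by rw [hs, hd]; ring
  rw [hsq, hcc]
  -- goal: 0 ≤ 4*d*s*sin a + 2*a*(-2*sin s*sin d)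
  rcases le_or_gt a t with hle | hlt
  · -- d ≥ 0 case
    have hd0 : 0 ≤ d := by rw [hd]; linarith
    have hdpi : d ≤ Real.pi := by rw [hd]; linarith [Real.pi_pos]
    have h1 : Real.sin d ≤ d := Real.sin_le hd0
    have h2 : 0 ≤ Real.sin d := Real.sin_nonneg_of_mem_Icc ⟨hd0, hdpi⟩
    have has : a ≤ s := by rw [hs]; linarith
    have h3 : a * Real.sin s ≤ s * Real.sin a := aux_sin_ratio (le_of_lt ha0) has hspi
    nlinarith [mul_le_mul_of_nonneg_left h1 (mul_nonneg (le_of_lt ha0) hsins),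
      mul_le_mul_of_nonneg_right h3 hd0]
  · -- d < 0 case; let u = -d > 0, so s + u = a
    set u := -d with hu
    have hu0 : 0 < u := by rw [hu, hd]; linarith
    have hsu : s + u = a := by rw [hs, hu, hd]; ring
    have hupi : u ≤ Real.pi := by rw [hu, hd]; linarith
    have hsinu : 0 ≤ Real.sin u := Real.sin_nonneg_of_mem_Icc ⟨le_of_lt hu0, hupi⟩
    have hsind : Real.sin d = -Real.sin u := by rw [hu, Real.sin_neg, neg_neg]
    have hadd : Real.sin a = Real.sin s * Real.cos u + Real.cos s * Real.sin u := by
      rw [← hsu]; exact Real.sin_add s u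
    have h1 : u * Real.cos u ≤ Real.sin u := aux_xcos_le_sin (le_of_lt hu0) hupi
    have h2 : s * Real.cos s ≤ Real.sin s := aux_xcos_le_sin hs0 hspi
    rw [hsind]
    -- need: 0 ≤ 4*d*s*sin a + 2*a*(-2*sin s*(-sin u)) = 4*(a*sin s*sin u - s*u*sin a) since d = -u... a = s+u
    have hid : 4 * d * s * Real.sin a + 2 * a * (-2 * Real.sin s * -Real.sin u) =
        4 * (s * Real.sin s * (Real.sin u - u * Real.cos u)
          + u * Real.sin u * (Real.sin s - s * Real.cos s)) := by
      rw [hadd, ← hsu, hu]; ring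
    rw [hid]
    nlinarith [mul_nonneg (mul_nonneg hs0 hsins) (sub_nonneg.mpr h1),
      mul_nonneg (mul_nonneg (le_of_lt hu0) hsinu) (sub_nonneg.mpr h2)]

theorem arccos_sq_tangent_bound :
    ∀ z ∈ Set.Icc (0 : ℝ) 1, ∀ ℓ ∈ Set.Ioo (0 : ℝ) (2 * Real.pi),
      (Real.arccos z) ^ 2 ≥
        ℓ ^ 2 / 4 - (ℓ / Real.sin (ℓ / 2)) * (z - Real.cos (ℓ / 2)) := by
  intro z hz ℓ hℓ
  obtain ⟨hz0, hz1⟩ := hz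
  obtain ⟨hℓ0, hℓ2⟩ := hℓ
  set t := Real.arccos z with htdef
  set a := ℓ / 2 with hadef
  have ha0 : 0 < a := by rw [hadef]; linarith
  have hapi : a < Real.pi := by rw [hadef]; linarith
  have hsina : 0 < Real.sin a := Real.sin_pos_of_pos_of_lt_pi ha0 hapi
  have ht0 : 0 ≤ t := Real.arccos_nonneg z
  have htpi : t ≤ Real.pi := Real.arccos_le_pi z
  have hzc : Real.cos t = z := Real.cos_arccos (by linarith) hz1
  have hkey := aux_key ht0 htpi ha0 hapi
  rw [ge_iff_le, ← sub_nonneg]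
  have heq : t ^ 2 - (ℓ ^ 2 / 4 - ℓ / Real.sin (ℓ / 2) * (z - Real.cos (ℓ / 2))) =
      ((t ^ 2 - a ^ 2) * Real.sin a + 2 * a * (Real.cos t - Real.cos a)) / Real.sin a := by
    rw [← hzc, ← hadef]
    have hℓa : ℓ = 2 * a := by rw [hadef]; ring
    rw [hℓa]
    field_simp
    ring
  rw [heq]
  exact div_nonneg hkey (le_of_lt hsina)
end

section
/- The function f(x,t) = 2·e^t·arctan(e^{-t}·sin(x/2)) satisfies the partial differential equation ∂f/∂t = 4·∂²f/∂x² + f − (4·∂f/∂x / sin(x/2))·(∂f/∂x − cos(x/2)) for x ∈ (0, 2π) and t ∈ ℝ. -/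
private lemma sin_half_deriv (x : ℝ) :
    HasDerivAt (fun y : ℝ => Real.sin (y / 2)) (Real.cos (x / 2) * (1 / 2)) x := by
  have h : HasDerivAt (fun y : ℝ => y / 2) (1 / 2) x := (hasDerivAt_id x).div_const 2
  exact (Real.hasDerivAt_sin (x / 2)).comp x h

private lemma cos_half_deriv (x : ℝ) :
    HasDerivAt (fun y : ℝ => Real.cos (y / 2)) (-Real.sin (x / 2) * (1 / 2)) x := by
  have h : HasDerivAt (fun y : ℝ => y / 2) (1 / 2) x := (hasDerivAt_id x).div_const 2
  exact (Real.hasDerivAt_cos (x / 2)).comp x h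

private lemma deriv_x_aux (x t : ℝ) :
    HasDerivAt (fun y : ℝ => 2 * Real.exp t * Real.arctan (Real.exp (-t) * Real.sin (y / 2)))
      (Real.cos (x / 2) / (1 + (Real.exp (-t) * Real.sin (x / 2)) ^ 2)) x := by
  have h1 : HasDerivAt (fun y : ℝ => Real.exp (-t) * Real.sin (y / 2))
      (Real.exp (-t) * (Real.cos (x / 2) * (1 / 2))) x := (sin_half_deriv x).const_mul _
  have h2 := (Real.hasDerivAt_arctan (Real.exp (-t) * Real.sin (x / 2))).comp x h1
  have h3 := h2.const_mul (2 * Real.exp t)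
  refine h3.congr_deriv ?_
  have hne : (1 + (Real.exp (-t) * Real.sin (x / 2)) ^ 2) ≠ 0 := by positivity
  rw [Real.exp_neg] at *
  field_simp

private lemma deriv_t_aux (x t : ℝ) :
    HasDerivAt (fun s : ℝ => 2 * Real.exp s * Real.arctan (Real.exp (-s) * Real.sin (x / 2)))
      (2 * Real.exp t * Real.arctan (Real.exp (-t) * Real.sin (x / 2))
        - 2 * Real.sin (x / 2) / (1 + (Real.exp (-t) * Real.sin (x / 2)) ^ 2)) t := by
  have h0 : HasDerivAt (fun s : ℝ => Real.exp (-s)) (-Real.exp (-t)) t := by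
    exact ((Real.hasDerivAt_exp (-t)).comp t ((hasDerivAt_id t).neg)).congr_deriv (by simp)
  have h1 : HasDerivAt (fun s : ℝ => Real.exp (-s) * Real.sin (x / 2))
      (-Real.exp (-t) * Real.sin (x / 2)) t := h0.mul_const _
  have h2 := (Real.hasDerivAt_arctan (Real.exp (-t) * Real.sin (x / 2))).comp t h1
  have h3 : HasDerivAt (fun s : ℝ => 2 * Real.exp s) (2 * Real.exp t) t :=
    (Real.hasDerivAt_exp t).const_mul 2
  have h4 := h3.mul h2
  refine h4.congr_deriv ?_
  have hne : (1 + (Real.exp (-t) * Real.sin (x / 2)) ^ 2) ≠ 0 := by positivity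
  simp only [Real.exp_neg, Function.comp_apply] at hne ⊢
  field_simp
  ring

private lemma deriv_xx_aux (x t : ℝ) :
    HasDerivAt (fun y : ℝ => Real.cos (y / 2) / (1 + (Real.exp (-t) * Real.sin (y / 2)) ^ 2))
      ((-Real.sin (x / 2) * (1 / 2) * (1 + (Real.exp (-t) * Real.sin (x / 2)) ^ 2) -
        Real.cos (x / 2) * (2 * (Real.exp (-t) * Real.sin (x / 2)) ^ 1 *
          (Real.exp (-t) * (Real.cos (x / 2) * (1 / 2))))) /
        (1 + (Real.exp (-t) * Real.sin (x / 2)) ^ 2) ^ 2) x := by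
  have hc := cos_half_deriv x
  have h1 : HasDerivAt (fun y : ℝ => Real.exp (-t) * Real.sin (y / 2))
      (Real.exp (-t) * (Real.cos (x / 2) * (1 / 2))) x := (sin_half_deriv x).const_mul _
  have h2 : HasDerivAt (fun y : ℝ => (Real.exp (-t) * Real.sin (y / 2)) ^ 2)
      (2 * (Real.exp (-t) * Real.sin (x / 2)) ^ 1 *
        (Real.exp (-t) * (Real.cos (x / 2) * (1 / 2)))) x := h1.pow 2
  have hd : HasDerivAt (fun y : ℝ => 1 + (Real.exp (-t) * Real.sin (y / 2)) ^ 2)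
      (2 * (Real.exp (-t) * Real.sin (x / 2)) ^ 1 *
        (Real.exp (-t) * (Real.cos (x / 2) * (1 / 2)))) x := h2.const_add 1
  have hne : (1 + (Real.exp (-t) * Real.sin (x / 2)) ^ 2) ≠ 0 := by positivity
  exact hc.div hd hne

theorem f_satisfies_pde (f : ℝ → ℝ → ℝ)
    (hf : ∀ x t : ℝ, f x t =
      2 * Real.exp t * Real.arctan (Real.exp (-t) * Real.sin (x / 2))) :
    ∀ x ∈ Set.Ioo (0 : ℝ) (2 * Real.pi), ∀ t : ℝ,
      deriv (fun s => f x s) t =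
        4 * deriv (fun y => deriv (fun y' => f y' t) y) x + f x t -
          (4 * deriv (fun y => f y t) x / Real.sin (x / 2)) *
            (deriv (fun y => f y t) x - Real.cos (x / 2)) := by
  intro x hx t
  obtain ⟨hx0, hx2⟩ := hx
  have hs : 0 < Real.sin (x / 2) := by
    apply Real.sin_pos_of_pos_of_lt_pi
    · linarith
    · linarith [Real.pi_pos]
  have hft : (fun s => f x s) = fun s : ℝ =>
      2 * Real.exp s * Real.arctan (Real.exp (-s) * Real.sin (x / 2)) := funext fun s => hf x s
  have hfx : (fun y => f y t) = fun y : ℝ =>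
      2 * Real.exp t * Real.arctan (Real.exp (-t) * Real.sin (y / 2)) := funext fun y => hf y t
  have hd1 : deriv (fun s => f x s) t =
      2 * Real.exp t * Real.arctan (Real.exp (-t) * Real.sin (x / 2))
        - 2 * Real.sin (x / 2) / (1 + (Real.exp (-t) * Real.sin (x / 2)) ^ 2) := by
    rw [hft]; exact (deriv_t_aux x t).deriv
  have hd2 : ∀ y : ℝ, deriv (fun y' => f y' t) y =
      Real.cos (y / 2) / (1 + (Real.exp (-t) * Real.sin (y / 2)) ^ 2) := by
    intro y
    rw [hfx]; exact (deriv_x_aux y t).deriv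
  have hd3 : deriv (fun y => deriv (fun y' => f y' t) y) x =
      (-Real.sin (x / 2) * (1 / 2) * (1 + (Real.exp (-t) * Real.sin (x / 2)) ^ 2) -
        Real.cos (x / 2) * (2 * (Real.exp (-t) * Real.sin (x / 2)) ^ 1 *
          (Real.exp (-t) * (Real.cos (x / 2) * (1 / 2))))) /
        (1 + (Real.exp (-t) * Real.sin (x / 2)) ^ 2) ^ 2 := by
    have : (fun y => deriv (fun y' => f y' t) y) = fun y : ℝ =>
        Real.cos (y / 2) / (1 + (Real.exp (-t) * Real.sin (y / 2)) ^ 2) := funext hd2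
    rw [this]; exact (deriv_xx_aux x t).deriv
  rw [hd1, hd2 x, hd3, hf x t]
  have hne : (1 + (Real.exp (-t) * Real.sin (x / 2)) ^ 2) ≠ 0 := by positivity
  have hsne : Real.sin (x / 2) ≠ 0 := ne_of_gt hs
  field_simp
  ring
end
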